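/- arXiv:2306.07362 — 4 statements merged into one kernel-verified Lean document; each statement's English description precedes it below -/
import Mathlib

section
/- Let (Ω, 𝒜, P) be a probability space, 𝒢 ⊆ 𝒜 a sub-σ-algebra, and for each i = 1, …, m let θ_i : Ω → {0,1} be a random variable and let T_i be a 𝒢-measurable random variable with 0 ≤ T_i < 1 almost surely that is a version of the conditional expectation E[1 − θ_i | 𝒢]. Fix α ∈ (0,1) and t* ∈ (α, 1) such that E[∑_{i=1}^m (T_i − α)·1{T_i < t*}] = 0. Then for every 𝒢-measurable decision rule δ = (δ_1, …, δ_m) : Ω → {0,1}^m satisfying E[∑_{i=1}^m (1 − θ_i) δ_i] ≤ α · E[∑_{i=1}^m δ_i], one has E[∑_{i=1}^m θ_i · 1{T_i < t*}] ≥ E[∑_{i=1}^m θ_i δ_i]. -/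
open MeasureTheory

/-- Optimality part of Theorem 1: the oracle thresholding rule `1{T_i < t*}` maximizes the
expected number of true positives among all `𝒢`-measurable decision rules whose
marginal false discovery rate is at most `α`. -/
theorem oracle_optimality
    {Ω : Type*} (𝒢 : MeasurableSpace Ω) {mΩ : MeasurableSpace Ω} (P : Measure Ω) [IsProbabilityMeasure P]
    (h𝒢 : 𝒢 ≤ mΩ)
    (m : ℕ) (θ T : Fin m → Ω → ℝ)
    (hθmeas : ∀ i, Measurable (θ i))
    (hθval : ∀ i ω, θ i ω = 0 ∨ θ i ω = 1)
    (hTmeas : ∀ i, Measurable[𝒢] (T i))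
    (hTrange : ∀ i, ∀ᵐ ω ∂P, 0 ≤ T i ω ∧ T i ω < 1)
    (hTcond : ∀ i, T i =ᵐ[P] P[fun ω => 1 - θ i ω | 𝒢])
    (α tstar : ℝ) (hα : α ∈ Set.Ioo (0 : ℝ) 1) (ht : tstar ∈ Set.Ioo α 1)
    (hcalib : ∫ ω, (∑ i, (T i ω - α) * (if T i ω < tstar then (1 : ℝ) else 0)) ∂P = 0)
    (δ : Fin m → Ω → ℝ)
    (hδmeas : ∀ i, Measurable[𝒢] (δ i))
    (hδval : ∀ i ω, δ i ω = 0 ∨ δ i ω = 1)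
    (hmFDR : ∫ ω, (∑ i, (1 - θ i ω) * δ i ω) ∂P ≤ α * ∫ ω, (∑ i, δ i ω) ∂P) :
    ∫ ω, (∑ i, θ i ω * (if T i ω < tstar then (1 : ℝ) else 0)) ∂P ≥
      ∫ ω, (∑ i, θ i ω * δ i ω) ∂P := by
  classical
  let _instm : MeasurableSpace Ω := mΩ
  set d : Fin m → Ω → ℝ := fun i ω => if T i ω < tstar then (1 : ℝ) else 0 with hd_def
  have hdval : ∀ i ω, d i ω = 0 ∨ d i ω = 1 := by
    intro i ω; by_cases h : T i ω < tstar <;> simp [d, h]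
  have hdmeas : ∀ i, Measurable[𝒢] (d i) := by
    intro i
    exact Measurable.ite (measurableSet_lt (hTmeas i) measurable_const)
      measurable_const measurable_const
  have hθm0 : ∀ i, Measurable[mΩ] (θ i) := fun i => (hθmeas i)
  have hδm0 : ∀ i, Measurable[mΩ] (δ i) := fun i => (hδmeas i).mono h𝒢 le_rfl
  have hdm0 : ∀ i, Measurable[mΩ] (d i) := fun i => (hdmeas i).mono h𝒢 le_rfl
  -- integrability of bounded {0,1}-valued functions
  have hbd : ∀ (g : Ω → ℝ), Measurable[mΩ] g → (∀ ω, g ω = 0 ∨ g ω = 1) → Integrable g P := by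
    intro g hg hv
    refine ⟨hg.aestronglyMeasurable, HasFiniteIntegral.of_bounded (C := 1) ?_⟩
    filter_upwards with ω
    rcases hv ω with h | h <;> simp [h]
  have hθint : ∀ i, Integrable (θ i) P := fun i => hbd _ (hθm0 i) (hθval i)
  have h1θint : ∀ i, Integrable (fun ω => 1 - θ i ω) P := fun i =>
    (integrable_const (1 : ℝ)).sub (hθint i)
  have hTint : ∀ i, Integrable (T i) P := fun i =>
    (integrable_condExp).congr (hTcond i).symm
  have hδint : ∀ i, Integrable (δ i) P := fun i => hbd _ (hδm0 i) (hδval i)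
  have hdint : ∀ i, Integrable (d i) P := fun i => hbd _ (hdm0 i) (hdval i)
  -- product with {0,1}-valued equals indicator
  have hmul : ∀ (f g : Ω → ℝ), (∀ ω, g ω = 0 ∨ g ω = 1) →
      (fun ω => f ω * g ω) = (g ⁻¹' {1}).indicator f := by
    intro f g hv
    funext ω
    rcases hv ω with h | h <;>
      simp [Set.indicator, Set.mem_preimage, h]
  have hprod01 : ∀ (f g : Ω → ℝ), (∀ ω, f ω = 0 ∨ f ω = 1) → (∀ ω, g ω = 0 ∨ g ω = 1) →
      ∀ ω, f ω * g ω = 0 ∨ f ω * g ω = 1 := by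
    intro f g hf hg ω
    rcases hf ω with h | h <;> rcases hg ω with h' | h' <;> simp [h, h']
  -- integrability of T i * g
  have hTg_int : ∀ i (g : Ω → ℝ), Measurable[𝒢] g → (∀ ω, g ω = 0 ∨ g ω = 1) →
      Integrable (fun ω => T i ω * g ω) P := by
    intro i g hgm hgv
    rw [hmul _ g hgv]
    exact (hTint i).indicator (h𝒢 _ (hgm (measurableSet_singleton 1)))
  have hTdint : ∀ i, Integrable (fun ω => T i ω * d i ω) P := fun i =>
    hTg_int i (d i) (hdmeas i) (hdval i)
  have hTδint : ∀ i, Integrable (fun ω => T i ω * δ i ω) P := fun i =>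
    hTg_int i (δ i) (hδmeas i) (hδval i)
  -- key conditional expectation identity
  have key : ∀ i (g : Ω → ℝ), Measurable[𝒢] g → (∀ ω, g ω = 0 ∨ g ω = 1) →
      ∫ ω, (1 - θ i ω) * g ω ∂P = ∫ ω, T i ω * g ω ∂P := by
    intro i g hgm hgv
    have hS : MeasurableSet[𝒢] (g ⁻¹' {1}) := hgm (measurableSet_singleton 1)
    rw [hmul _ g hgv, hmul _ g hgv, integral_indicator (h𝒢 _ hS),
      integral_indicator (h𝒢 _ hS)]
    have h1 : ∫ ω in g ⁻¹' {1}, T i ω ∂P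
        = ∫ ω in g ⁻¹' {1}, (P[fun ω => 1 - θ i ω | 𝒢]) ω ∂P :=
      setIntegral_congr_ae (h𝒢 _ hS) ((hTcond i).mono fun ω h _ => h)
    rw [h1, setIntegral_condExp h𝒢 (h1θint i) hS]
  -- key2 : ∫ θ g = ∫ g - ∫ T g
  have key2 : ∀ i (g : Ω → ℝ), Measurable[mΩ] g → Measurable[𝒢] g →
      (∀ ω, g ω = 0 ∨ g ω = 1) →
      ∫ ω, θ i ω * g ω ∂P = ∫ ω, g ω ∂P - ∫ ω, T i ω * g ω ∂P := by
    intro i g hgm0 hgm hgv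
    have h1 : (fun ω => θ i ω * g ω) = fun ω => g ω - (1 - θ i ω) * g ω := by
      funext ω; ring
    have hint1 : Integrable (fun ω => (1 - θ i ω) * g ω) P :=
      hbd _ ((measurable_const.sub (hθm0 i)).mul hgm0)
        (hprod01 _ g (fun ω => by rcases hθval i ω with h | h <;> simp [h]) hgv)
    rw [h1, integral_sub (hbd _ hgm0 hgv) hint1, key i g hgm hgv]
  -- abbreviations
  set A := ∑ i, ∫ ω, T i ω * d i ω ∂P with hA
  set B := ∑ i, ∫ ω, d i ω ∂P with hB
  set C := ∑ i, ∫ ω, T i ω * δ i ω ∂P with hC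
  set D := ∑ i, ∫ ω, δ i ω ∂P with hD
  -- rewrite goal
  have hgoalL : ∫ ω, (∑ i, θ i ω * (if T i ω < tstar then (1 : ℝ) else 0)) ∂P = B - A := by
    rw [integral_finset_sum (f := fun i ω => θ i ω * (if T i ω < tstar then (1 : ℝ) else 0)) _ (fun i _ =>
      hbd _ ((hθm0 i).mul (hdm0 i)) (hprod01 _ _ (hθval i) (hdval i)))]
    rw [hB, hA, ← Finset.sum_sub_distrib]
    exact Finset.sum_congr rfl fun i _ => key2 i (d i) (hdm0 i) (hdmeas i) (hdval i)
  have hgoalR : ∫ ω, (∑ i, θ i ω * δ i ω) ∂P = D - C := by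
    rw [integral_finset_sum (f := fun i ω => θ i ω * δ i ω) _ (fun i _ =>
      hbd _ ((hθm0 i).mul (hδm0 i)) (hprod01 _ _ (hθval i) (hδval i)))]
    rw [hD, hC, ← Finset.sum_sub_distrib]
    exact Finset.sum_congr rfl fun i _ => key2 i (δ i) (hδm0 i) (hδmeas i) (hδval i)
  -- calibration: A = α * B
  have hTαd_int : ∀ i, Integrable (fun ω => (T i ω - α) * d i ω) P := by
    intro i
    refine ((hTdint i).sub ((hdint i).const_mul α)).congr ?_
    filter_upwards with ω
    simp only [Pi.sub_apply]; ring
  have hTαd_eq : ∀ i, ∫ ω, (T i ω - α) * d i ω ∂P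
      = ∫ ω, T i ω * d i ω ∂P - α * ∫ ω, d i ω ∂P := by
    intro i
    have h1 : ∫ ω, (T i ω - α) * d i ω ∂P
        = ∫ ω, (T i ω * d i ω - α * d i ω) ∂P := by
      congr 1; funext ω; ring
    rw [h1, integral_sub (hTdint i) ((hdint i).const_mul α), integral_const_mul]
  have hcal : A - α * B = 0 := by
    rw [← hcalib, integral_finset_sum _ (fun i _ => hTαd_int i)]
    rw [hA, hB, Finset.mul_sum, ← Finset.sum_sub_distrib]
    exact (Finset.sum_congr rfl fun i _ => hTαd_eq i).symm
  -- mFDR: C ≤ α * D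
  have hCD : C ≤ α * D := by
    have h1 : ∫ ω, (∑ i, (1 - θ i ω) * δ i ω) ∂P = C := by
      rw [integral_finset_sum (f := fun i ω => (1 - θ i ω) * δ i ω) _ (fun i _ =>
        hbd _ ((measurable_const.sub (hθm0 i)).mul (hδm0 i))
          (hprod01 _ _ (fun ω => by rcases hθval i ω with h | h <;> simp [h]) (hδval i)))]
      exact Finset.sum_congr rfl fun i _ => key i (δ i) (hδmeas i) (hδval i)
    have h2 : ∫ ω, (∑ i, δ i ω) ∂P = D := by
      rw [integral_finset_sum _ (fun i _ => hδint i)]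
    rw [h1, h2] at hmFDR
    exact hmFDR
  -- pointwise inequality: t* B - A - (t* D - C) ≥ 0
  have htd_int : ∀ i, Integrable (fun ω => tstar * d i ω - T i ω * d i ω) P := by
    intro i
    refine (((hdint i).const_mul tstar).sub (hTdint i)).congr ?_
    filter_upwards with ω; simp only [Pi.sub_apply]
  have htδ_int : ∀ i, Integrable (fun ω => tstar * δ i ω - T i ω * δ i ω) P := by
    intro i
    refine (((hδint i).const_mul tstar).sub (hTδint i)).congr ?_
    filter_upwards with ω; simp only [Pi.sub_apply]
  have hint_i : ∀ i, Integrable (fun ω => (tstar - T i ω) * (d i ω - δ i ω)) P := by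
    intro i
    refine ((htd_int i).sub (htδ_int i)).congr ?_
    filter_upwards with ω
    simp only [Pi.sub_apply]; ring
  have hpt : 0 ≤ tstar * B - A - (tstar * D - C) := by
    have hnn : 0 ≤ ∫ ω, (∑ i, (tstar - T i ω) * (d i ω - δ i ω)) ∂P := by
      refine integral_nonneg fun ω => Finset.sum_nonneg fun i _ => ?_
      by_cases h : T i ω < tstar
      · have hd1 : d i ω = 1 := by simp [d, h]
        have h2 : δ i ω ≤ 1 := by rcases hδval i ω with h' | h' <;> simp [h']
        nlinarith
      · have hd0 : d i ω = 0 := by simp [d, h]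
        have h2 : 0 ≤ δ i ω := by rcases hδval i ω with h' | h' <;> simp [h']
        push_neg at h
        nlinarith
    have hexp : ∫ ω, (∑ i, (tstar - T i ω) * (d i ω - δ i ω)) ∂P
        = tstar * B - A - (tstar * D - C) := by
      rw [integral_finset_sum _ (fun i _ => hint_i i)]
      rw [hA, hB, hC, hD, Finset.mul_sum, Finset.mul_sum,
        ← Finset.sum_sub_distrib, ← Finset.sum_sub_distrib, ← Finset.sum_sub_distrib]
      refine Finset.sum_congr rfl fun i _ => ?_
      have hre : (fun ω => (tstar - T i ω) * (d i ω - δ i ω))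
          = fun ω => (tstar * d i ω - T i ω * d i ω) - (tstar * δ i ω - T i ω * δ i ω) := by
        funext ω; ring
      have h1 : ∫ ω, tstar * d i ω - T i ω * d i ω ∂P
          = tstar * ∫ ω, d i ω ∂P - ∫ ω, T i ω * d i ω ∂P := by
        rw [integral_sub ((hdint i).const_mul tstar) (hTdint i), integral_const_mul]
      have h2 : ∫ ω, tstar * δ i ω - T i ω * δ i ω ∂P
          = tstar * ∫ ω, δ i ω ∂P - ∫ ω, T i ω * δ i ω ∂P := by
        rw [integral_sub ((hδint i).const_mul tstar) (hTδint i), integral_const_mul]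
      rw [hre, integral_sub (htd_int i) (htδ_int i), h1, h2]
    rw [hexp] at hnn
    exact hnn
  rw [hgoalL, hgoalR, ge_iff_le]
  obtain ⟨hα0, hα1⟩ := hα
  obtain ⟨htα, ht1⟩ := ht
  nlinarith [hpt, hcal, hCD]
end

section
/- Let T_1, …, T_m be random variables on a probability space with values in [0,1], and let 0 < t₁ < t₂ ≤ 1 be such that E[∑_{i=1}^m 1{T_i < t₁}] > 0. Define α(t) = E[∑_{i=1}^m T_i 1{T_i < t}] / E[∑_{i=1}^m 1{T_i < t}]. Then α(t₁) ≤ α(t₂); that is, the function t ↦ α(t) is nondecreasing. -/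
open MeasureTheory

private lemma ind_integrable {Ω : Type*} {mΩ : MeasurableSpace Ω} (P : Measure Ω)
    [IsProbabilityMeasure P] {m : ℕ} (T : Fin m → Ω → ℝ)
    (hTmeas : ∀ i, Measurable (T i)) (t : ℝ) :
    Integrable (fun ω => ∑ i, (if T i ω < t then (1 : ℝ) else 0)) P := by
  apply integrable_finset_sum
  intro i _
  have hs : MeasurableSet {ω | T i ω < t} := measurableSet_lt (hTmeas i) measurable_const
  have h := (integrable_const (1 : ℝ) (μ := P)).indicator hs
  refine h.congr (Filter.Eventually.of_forall fun ω => ?_)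
  simp [Set.indicator_apply, Set.mem_setOf_eq]

private lemma mulind_integrable {Ω : Type*} {mΩ : MeasurableSpace Ω} (P : Measure Ω)
    [IsProbabilityMeasure P] {m : ℕ} (T : Fin m → Ω → ℝ)
    (hTmeas : ∀ i, Measurable (T i))
    (hTrange : ∀ i ω, T i ω ∈ Set.Icc (0 : ℝ) 1) (t : ℝ) :
    Integrable (fun ω => ∑ i, T i ω * (if T i ω < t then (1 : ℝ) else 0)) P := by
  apply integrable_finset_sum
  intro i _
  have hs : MeasurableSet {ω | T i ω < t} := measurableSet_lt (hTmeas i) measurable_const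
  have hmeas : Measurable (fun ω => T i ω * (if T i ω < t then (1 : ℝ) else 0)) :=
    (hTmeas i).mul (Measurable.ite hs measurable_const measurable_const)
  refine (integrable_const (1 : ℝ) (μ := P)).mono' hmeas.aestronglyMeasurable
    (Filter.Eventually.of_forall fun ω => ?_)
  have h0 := (hTrange i ω).1
  have h1 := (hTrange i ω).2
  by_cases h : T i ω < t <;> simp [h, abs_of_nonneg, h0] <;> linarith

/-- Claim (ii) in Part (a) of the proof of Theorem 1: the mFDR level
`α(t) = E[∑ T_i 1{T_i < t}] / E[∑ 1{T_i < t}]` of the oracle thresholding rule is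
nondecreasing in the threshold `t`. -/
theorem mFDR_mono
    {Ω : Type*} {mΩ : MeasurableSpace Ω} (P : Measure Ω) [IsProbabilityMeasure P]
    (m : ℕ) (T : Fin m → Ω → ℝ)
    (hTmeas : ∀ i, Measurable (T i))
    (hTrange : ∀ i ω, T i ω ∈ Set.Icc (0 : ℝ) 1)
    (t₁ t₂ : ℝ) (ht₁ : 0 < t₁) (h₁₂ : t₁ < t₂) (ht₂ : t₂ ≤ 1)
    (hpos : 0 < ∫ ω, (∑ i, (if T i ω < t₁ then (1 : ℝ) else 0)) ∂P) :
    (∫ ω, (∑ i, T i ω * (if T i ω < t₁ then (1 : ℝ) else 0)) ∂P) /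
        (∫ ω, (∑ i, (if T i ω < t₁ then (1 : ℝ) else 0)) ∂P) ≤
      (∫ ω, (∑ i, T i ω * (if T i ω < t₂ then (1 : ℝ) else 0)) ∂P) /
        (∫ ω, (∑ i, (if T i ω < t₂ then (1 : ℝ) else 0)) ∂P) := by
  set S₁ : Ω → ℝ := fun ω => ∑ i, (if T i ω < t₁ then (1 : ℝ) else 0) with hS₁
  set S₂ : Ω → ℝ := fun ω => ∑ i, (if T i ω < t₂ then (1 : ℝ) else 0) with hS₂
  set F₁ : Ω → ℝ := fun ω => ∑ i, T i ω * (if T i ω < t₁ then (1 : ℝ) else 0) with hF₁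
  set F₂ : Ω → ℝ := fun ω => ∑ i, T i ω * (if T i ω < t₂ then (1 : ℝ) else 0) with hF₂
  have intS₁ := ind_integrable P T hTmeas t₁
  have intS₂ := ind_integrable P T hTmeas t₂
  have intF₁ := mulind_integrable P T hTmeas hTrange t₁
  have intF₂ := mulind_integrable P T hTmeas hTrange t₂
  set B₁ := ∫ ω, S₁ ω ∂P with hB₁def
  set B₂ := ∫ ω, S₂ ω ∂P with hB₂def
  set A₁ := ∫ ω, F₁ ω ∂P with hA₁def
  set A₂ := ∫ ω, F₂ ω ∂P with hA₂def
  have hB₁pos : 0 < B₁ := hpos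
  -- B₁ ≤ B₂
  have hBle : B₁ ≤ B₂ := by
    apply integral_mono intS₁ intS₂
    intro ω
    apply Finset.sum_le_sum
    intro i _
    by_cases h : T i ω < t₁ <;> by_cases h' : T i ω < t₂ <;> simp [h, h'] <;> linarith
  have hB₂pos : 0 < B₂ := lt_of_lt_of_le hB₁pos hBle
  -- 0 ≤ A₁
  have hA₁nonneg : 0 ≤ A₁ := by
    apply integral_nonneg
    intro ω
    apply Finset.sum_nonneg
    intro i _
    have h0 := (hTrange i ω).1
    by_cases h : T i ω < t₁ <;> simp [h, h0]
  -- A₁ ≤ t₁ * B₁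
  have hAB : A₁ ≤ t₁ * B₁ := by
    have : A₁ ≤ ∫ ω, t₁ * S₁ ω ∂P := by
      apply integral_mono intF₁ (intS₁.const_mul t₁)
      intro ω
      simp only [hS₁, hF₁, Finset.mul_sum]
      apply Finset.sum_le_sum
      intro i _
      by_cases h : T i ω < t₁ <;> simp [h] <;> linarith
    simpa [integral_const_mul] using this
  -- t₁ * B₂ + A₁ ≤ A₂ + t₁ * B₁
  have hkey : t₁ * B₂ + A₁ ≤ A₂ + t₁ * B₁ := by
    have h : ∫ ω, (t₁ * S₂ ω + F₁ ω) ∂P ≤ ∫ ω, (F₂ ω + t₁ * S₁ ω) ∂P := by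
      apply integral_mono ((intS₂.const_mul t₁).add intF₁) (intF₂.add (intS₁.const_mul t₁))
      intro ω
      simp only [Pi.add_apply, Finset.mul_sum, ← Finset.sum_add_distrib]
      apply Finset.sum_le_sum
      intro i _
      by_cases h : T i ω < t₁ <;> by_cases h' : T i ω < t₂ <;> simp [h, h'] <;> linarith
    rw [integral_add (intS₂.const_mul t₁) intF₁, integral_add intF₂ (intS₁.const_mul t₁),
      integral_const_mul, integral_const_mul] at h
    exact h
  rw [div_le_div_iff₀ hB₁pos hB₂pos]
  nlinarith [mul_nonneg (sub_nonneg.2 hBle) (sub_nonneg.2 hAB),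
    mul_nonneg hB₁pos.le (by linarith : (0:ℝ) ≤ A₂ + t₁ * B₁ - A₁ - t₁ * B₂)]
end

section
/- Let τ > 0, M > 0 and ε > 0, and let g be a Borel probability measure on ℝ whose support is contained in [−M, M]. Then there exists S₀ ≥ 2 such that for every integer S ≥ S₀ there exist nonnegative weights θ_1, …, θ_S with ∑_{j=1}^S θ_j = 1 such that, with grid points u_j = −M + 2M(j−1)/(S−1) for j = 1, …, S, one has sup_{x ∈ ℝ} | ∫ φ_τ(x − u) dg(u) − ∑_{j=1}^S θ_j φ_τ(x − u_j) |² < ε. -/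
/-!
The Gaussian density is uniformly continuous (it is continuous and vanishes at infinity). Round
each `u ∈ [-M, M]` down to the grid and take for `θ` the masses of the pushforward of `g` under
this rounding. The discrete mixture is then the mixture against the rounded measure, and since
rounding moves each point by at most the mesh `2M/(S - 1)`, the two mixtures differ, uniformly in
`x`, by at most the modulus of continuity of `φ_τ` at the mesh.
-/

open MeasureTheory

noncomputable def gaussDensity (τ x : ℝ) : ℝ :=
  (τ * Real.sqrt (2 * Real.pi))⁻¹ * Real.exp (-(x ^ 2) / (2 * τ ^ 2))

open Filter Set Topology
open scoped ZeroAtInfty BoundedContinuousFunction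

lemma continuous_gaussDensity (τ : ℝ) : Continuous (gaussDensity τ) := by
  unfold gaussDensity
  fun_prop

lemma tendsto_gaussDensity_cocompact {τ : ℝ} (hτ : τ ≠ 0) :
    Tendsto (gaussDensity τ) (cocompact ℝ) (𝓝 0) := by
  have hsq : Tendsto (fun x : ℝ => x ^ 2) (cocompact ℝ) atTop := by
    simpa only [Function.comp_def, Real.norm_eq_abs, sq_abs] using
      (tendsto_pow_atTop two_ne_zero).comp (tendsto_norm_cocompact_atTop (E := ℝ))
  have hexp := Real.tendsto_exp_atBot.comp
    ((tendsto_neg_atTop_atBot.comp hsq).atBot_div_const (by positivity : 0 < 2 * τ ^ 2))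
  have := hexp.const_mul (τ * Real.sqrt (2 * Real.pi))⁻¹
  rwa [mul_zero] at this

noncomputable def gaussDensityZeroAtInfty {τ : ℝ} (hτ : τ ≠ 0) : C₀(ℝ, ℝ) where
  toFun := gaussDensity τ
  continuous_toFun := continuous_gaussDensity τ
  zero_at_infty' := tendsto_gaussDensity_cocompact hτ

/-- The grid point `u_{k+1}` of the paper: Lean indexes the grid by `k : Fin S`, starting at 0. -/
noncomputable def gridPoint (M : ℝ) (S k : ℕ) : ℝ := -M + 2 * M * k / ((S : ℝ) - 1)

noncomputable def gridSpacing (M : ℝ) (S : ℕ) : ℝ := 2 * M / ((S : ℝ) - 1)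

lemma exists_forall_gridSpacing_lt (M : ℝ) {δ : ℝ} (hδ : 0 < δ) :
    ∃ S₀ : ℕ, 2 ≤ S₀ ∧ ∀ S ≥ S₀, gridSpacing M S < δ := by
  have hlim : Tendsto (gridSpacing M) atTop (𝓝 0) :=
    tendsto_const_nhds.div_atTop
      (tendsto_atTop_add_const_right _ (-1) tendsto_natCast_atTop_atTop)
  obtain ⟨N, hN⟩ := eventually_atTop.mp (hlim.eventually (gt_mem_nhds hδ))
  exact ⟨max 2 N, le_max_left _ _, fun S hS => hN S (le_of_max_le_right hS)⟩

lemma exists_measurable_abs_gridPoint_sub_le {M : ℝ} (hM : 0 < M) {S : ℕ} (hS : 2 ≤ S) :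
    ∃ q : ℝ → Fin S, Measurable q ∧
      ∀ u ∈ Icc (-M) M, |gridPoint M S (q u) - u| ≤ gridSpacing M S := by
  have : NeZero S := ⟨by omega⟩
  have hS₁ : 0 < (S : ℝ) - 1 := by
    have : (2 : ℝ) ≤ S := by exact_mod_cast hS
    linarith
  set h := gridSpacing M S with hh_def
  have hh : 0 < h := div_pos (by positivity) hS₁
  refine ⟨fun u => Fin.ofNat S ⌊(u + M) / h⌋₊,
    (measurable_from_nat (f := Fin.ofNat S)).comp
      ((measurable_id.add_const M).div_const h).nat_floor, ?_⟩
  rintro u ⟨hu₁, hu₂⟩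
  set t := (u + M) / h with ht_def
  have ht₀ : 0 ≤ t := div_nonneg (by linarith) hh.le
  have htS : t ≤ ((S - 1 : ℕ) : ℝ) := by
    rw [Nat.cast_sub (by omega), Nat.cast_one, div_le_iff₀ hh, hh_def, gridSpacing,
      mul_div_cancel₀ _ hS₁.ne']
    linarith
  -- `Fin.ofNat` reduces modulo `S`, which is harmless on `[-M, M]`
  have hval : ((Fin.ofNat S ⌊t⌋₊ : Fin S) : ℕ) = ⌊t⌋₊ :=
    Nat.mod_eq_of_lt (by have := Nat.floor_le_of_le htS; omega)
  have hfloor : |(⌊t⌋₊ : ℝ) - t| ≤ 1 := by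
    rw [abs_sub_le_iff]
    constructor <;> linarith [Nat.floor_le ht₀, Nat.lt_floor_add_one t]
  calc |gridPoint M S (Fin.ofNat S ⌊t⌋₊ : Fin S) - u| = h * |(⌊t⌋₊ : ℝ) - t| := by
        rw [hval, ← abs_of_pos hh, ← abs_mul, gridPoint, ht_def, hh_def, gridSpacing]
        congr 1
        field_simp
        ring
    _ ≤ h := mul_le_of_le_one_right hh.le hfloor

lemma abs_integral_sub_sum_map_le {α ι : Type*} [MeasurableSpace α] [Fintype ι]
    [MeasurableSpace ι] [MeasurableSingletonClass ι] {μ : Measure α} [IsProbabilityMeasure μ]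
    {f : α → ℝ} (hf : Integrable f μ) {q : α → ι} (hq : Measurable q) (F : ι → ℝ) {η : ℝ}
    (hfq : ∀ᵐ a ∂μ, |f a - F (q a)| ≤ η) :
    |∫ a, f a ∂μ - ∑ i, (μ.map q).real {i} * F i| ≤ η := by
  have hFq : Integrable (fun a => F (q a)) μ := Integrable.of_finite.comp_measurable hq
  have hsum : ∑ i, (μ.map q).real {i} * F i = ∫ a, F (q a) ∂μ := by
    rw [← integral_map hq.aemeasurable (.of_discrete), integral_fintype .of_finite]
    simp only [smul_eq_mul]
  rw [hsum, ← integral_sub hf hFq]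
  simpa using norm_integral_le_of_norm_le_const (f := fun a => f a - F (q a)) hfq

theorem exists_grid_weights_abs_mixture_sub_lt (f : ℝ →ᵇ ℝ) (hf : UniformContinuous f)
    {M : ℝ} (hM : 0 < M) {μ : Measure ℝ} [IsProbabilityMeasure μ] (hμ : μ (Icc (-M) M)ᶜ = 0)
    {η : ℝ} (hη : 0 < η) :
    ∃ S₀ : ℕ, 2 ≤ S₀ ∧ ∀ S ≥ S₀, ∃ θ : Fin S → ℝ, (∀ j, 0 ≤ θ j) ∧ ∑ j, θ j = 1 ∧
      ∀ x, |∫ u, f (x - u) ∂μ - ∑ j, θ j * f (x - gridPoint M S j)| < η := by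
  obtain ⟨δ, hδ, hfδ⟩ := Metric.uniformContinuous_iff.mp hf (η / 2) (half_pos hη)
  obtain ⟨S₀, hS₀, hspacing⟩ := exists_forall_gridSpacing_lt M hδ
  refine ⟨S₀, hS₀, fun S hS => ?_⟩
  obtain ⟨q, hq, hqu⟩ := exists_measurable_abs_gridPoint_sub_le hM (hS₀.trans hS)
  refine ⟨fun j => (μ.map q).real {j}, fun j => measureReal_nonneg, ?_, fun x => ?_⟩
  · have : IsProbabilityMeasure (μ.map q) := Measure.isProbabilityMeasure_map hq.aemeasurable
    simp
  · have hclose : ∀ᵐ u ∂μ, |f (x - u) - f (x - gridPoint M S (q u))| ≤ η / 2 := by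
      filter_upwards [ae_iff.mpr hμ] with u hu
      refine (hfδ ?_).le
      rw [Real.dist_eq, sub_sub_sub_cancel_left]
      exact (hqu u hu).trans_lt (hspacing S hS)
    have hint : Integrable (fun u => f (x - u)) μ :=
      (f.compContinuous ⟨fun u => x - u, by fun_prop⟩).integrable μ
    exact (abs_integral_sub_sum_map_le hint hq _ hclose).trans_lt (half_lt_self hη)

/-- Lemma 1 of the paper: any Gaussian mixture with compactly supported mixing distribution
`g` can be uniformly approximated, to within any `ε`, by a discrete Gaussian mixture
supported on a fine enough equispaced grid in `[−M, M]`. -/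
theorem discrete_mixture_approximation
    (τ M ε : ℝ) (hτ : 0 < τ) (hM : 0 < M) (hε : 0 < ε)
    (g : Measure ℝ) [IsProbabilityMeasure g]
    (hsupp : g (Set.Icc (-M) M)ᶜ = 0) :
    ∃ S₀ : ℕ, 2 ≤ S₀ ∧ ∀ S : ℕ, S₀ ≤ S →
      ∃ θ : Fin S → ℝ, (∀ j, 0 ≤ θ j) ∧ (∑ j, θ j = 1) ∧
        ∀ x : ℝ,
          ((∫ u, gaussDensity τ (x - u) ∂g) -
              ∑ j, θ j * gaussDensity τ (x - (-M + 2 * M * (j : ℝ) / ((S : ℝ) - 1)))) ^ 2 < ε := by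
  let φ := gaussDensityZeroAtInfty hτ.ne'
  obtain ⟨S₀, hS₀, happrox⟩ := exists_grid_weights_abs_mixture_sub_lt φ.toBCF
    (ZeroAtInftyContinuousMap.uniformContinuous φ) hM hsupp (Real.sqrt_pos.mpr hε)
  refine ⟨S₀, hS₀, fun S hS => ?_⟩
  obtain ⟨θ, hθ₀, hθ₁, hθ⟩ := happrox S hS
  exact ⟨θ, hθ₀, hθ₁, fun x => Real.sq_lt.mpr (abs_lt.mp (hθ x))⟩
end

section
/- Let M > 0 and σ > 0, and let (g_n)_{n≥1} and g be Borel probability measures on ℝ whose supports are contained in [−M, M]. Write g * φ_τ(x) = ∫ φ_τ(x − u) dg(u). If ∫_ℝ (g_n * φ_σ(x) − g * φ_σ(x))² dx → 0 as n → ∞, then for every fixed τ > 0 one also has ∫_ℝ (g_n * φ_τ(x) − g * φ_τ(x))² dx → 0 as n → ∞. -/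
/-!
Write `Δ_s = g_n * φ_s - g * φ_s`. Since `φ_a * φ_b = φ_{√(a² + b²)}`, Fubini shows that the
`L²` inner product `⟪Δ_a, Δ_b⟫` depends on `(a, b)` only through `a² + b²`, and it is bounded
uniformly in `n` because the mixing measures have mass one. So if `a² + b² = 2τ²`, then
`‖Δ_τ‖² = ⟪Δ_a, Δ_b⟫ ≤ ‖Δ_a‖ ‖Δ_b‖ ≤ C ‖Δ_b‖`: convergence at scale `b` propagates to every
`τ` with `b² < 2τ²`, and finitely many such steps lead from `σ` to any `τ > 0`.
-/

open MeasureTheory Filter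

open Real ProbabilityTheory Topology

section GaussDensity

variable {s a b : ℝ}

lemma gaussDensity_nonneg (hs : 0 ≤ s) (x : ℝ) : 0 ≤ gaussDensity s x := by
  unfold gaussDensity
  positivity

@[fun_prop]
lemma measurable_gaussDensity (s : ℝ) : Measurable (gaussDensity s) := by
  unfold gaussDensity
  fun_prop

lemma gaussDensity_le_gaussDensity_zero (hs : 0 ≤ s) (x : ℝ) :
    gaussDensity s x ≤ gaussDensity s 0 := by
  unfold gaussDensity
  gcongr _ * exp ?_
  rw [zero_pow two_ne_zero, neg_zero, zero_div]
  exact div_nonpos_of_nonpos_of_nonneg (neg_nonpos.2 (sq_nonneg x)) (by positivity)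

lemma gaussDensity_eq_gaussianPDFReal (hs : 0 < s) :
    gaussDensity s = gaussianPDFReal 0 (s ^ 2).toNNReal := by
  ext x
  simp only [gaussianPDFReal_def, gaussDensity, Real.coe_toNNReal _ (sq_nonneg s), sub_zero]
  rw [sqrt_mul (by positivity : (0 : ℝ) ≤ 2 * π) (s ^ 2), sqrt_sq hs.le, mul_comm s]

lemma lintegral_ofReal_gaussDensity (hs : 0 < s) :
    ∫⁻ x, ENNReal.ofReal (gaussDensity s x) = 1 := by
  rw [gaussDensity_eq_gaussianPDFReal hs]
  exact lintegral_gaussianPDFReal_eq_one 0 (by simpa using hs.ne')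

-- Completing the square in `x`.
lemma gaussDensity_mul_gaussDensity (ha : 0 < a) (hb : 0 < b) (u v x : ℝ) :
    gaussDensity a (x - u) * gaussDensity b (x - v) =
      gaussDensity √(a ^ 2 + b ^ 2) (u - v) *
        gaussDensity (a * b / √(a ^ 2 + b ^ 2))
          (x - (u * b ^ 2 + v * a ^ 2) / (a ^ 2 + b ^ 2)) := by
  have hc2 : √(a ^ 2 + b ^ 2) ^ 2 = a ^ 2 + b ^ 2 := sq_sqrt (by positivity)
  unfold gaussDensity
  rw [mul_mul_mul_comm, mul_mul_mul_comm _ (exp _), ← exp_add, ← exp_add, div_pow, hc2,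
    ← mul_inv, ← mul_inv]
  congr 2
  · field_simp
  · field_simp
    ring

lemma lintegral_gaussDensity_mul_gaussDensity (ha : 0 < a) (hb : 0 < b) (u v : ℝ) :
    ∫⁻ x, ENNReal.ofReal (gaussDensity a (x - u)) * ENNReal.ofReal (gaussDensity b (x - v)) =
      ENNReal.ofReal (gaussDensity √(a ^ 2 + b ^ 2) (u - v)) := by
  have hr : 0 < a * b / √(a ^ 2 + b ^ 2) := by positivity
  simp_rw [← ENNReal.ofReal_mul (gaussDensity_nonneg ha.le _),
    gaussDensity_mul_gaussDensity ha hb u v,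
    ENNReal.ofReal_mul (gaussDensity_nonneg (sqrt_nonneg _) _)]
  rw [lintegral_const_mul _ (by fun_prop),
    lintegral_sub_right_eq_self (fun y => ENNReal.ofReal (gaussDensity _ y)),
    lintegral_ofReal_gaussDensity hr, mul_one]

end GaussDensity

section GaussMixture

noncomputable def gaussMixture (s : ℝ) (p : Measure ℝ) (x : ℝ) : ℝ :=
  ∫ u, gaussDensity s (x - u) ∂p

variable {s a b : ℝ} {p q : Measure ℝ}

lemma gaussMixture_nonneg (hs : 0 ≤ s) (x : ℝ) : 0 ≤ gaussMixture s p x :=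
  integral_nonneg fun _ => gaussDensity_nonneg hs _

lemma gaussMixture_le [IsFiniteMeasure p] (hs : 0 ≤ s) (x : ℝ) :
    gaussMixture s p x ≤ gaussDensity s 0 * p.real Set.univ := by
  refine (Real.le_norm_self _).trans
    (norm_integral_le_of_norm_le_const (ae_of_all _ fun u => ?_))
  rw [Real.norm_of_nonneg (gaussDensity_nonneg hs _)]
  exact gaussDensity_le_gaussDensity_zero hs _

lemma stronglyMeasurable_gaussMixture [SFinite p] : StronglyMeasurable (gaussMixture s p) :=
  StronglyMeasurable.integral_prod_right' (f := fun z : ℝ × ℝ => gaussDensity s (z.1 - z.2))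
    (by fun_prop)

lemma integrable_gaussDensity_sub [IsFiniteMeasure p] (hs : 0 ≤ s) (x : ℝ) :
    Integrable (fun u => gaussDensity s (x - u)) p :=
  Integrable.of_bound (by fun_prop : Measurable _).aestronglyMeasurable (gaussDensity s 0)
    (ae_of_all _ fun u => by
      rw [Real.norm_of_nonneg (gaussDensity_nonneg hs _)]
      exact gaussDensity_le_gaussDensity_zero hs _)

lemma integrable_gaussMixture [IsFiniteMeasure p] {μ : Measure ℝ} [IsFiniteMeasure μ]
    (hs : 0 ≤ s) : Integrable (gaussMixture s p) μ :=
  Integrable.of_bound stronglyMeasurable_gaussMixture.aestronglyMeasurable _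
    (ae_of_all _ fun x => by
      rw [Real.norm_of_nonneg (gaussMixture_nonneg hs x)]
      exact gaussMixture_le hs x)

lemma ofReal_gaussMixture [IsFiniteMeasure p] (hs : 0 ≤ s) (x : ℝ) :
    ENNReal.ofReal (gaussMixture s p x) = ∫⁻ u, ENNReal.ofReal (gaussDensity s (x - u)) ∂p :=
  ofReal_integral_eq_lintegral_ofReal (integrable_gaussDensity_sub hs x)
    (ae_of_all _ fun _ => gaussDensity_nonneg hs _)

lemma lintegral_ofReal_gaussMixture_mul [IsFiniteMeasure p] [IsFiniteMeasure q]
    (ha : 0 < a) (hb : 0 < b) :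
    ∫⁻ x, ENNReal.ofReal (gaussMixture a p x) * ENNReal.ofReal (gaussMixture b q x) =
      ∫⁻ u, ENNReal.ofReal (gaussMixture √(a ^ 2 + b ^ 2) q u) ∂p := by
  simp_rw [ofReal_gaussMixture ha.le, ofReal_gaussMixture hb.le, ofReal_gaussMixture
    (sqrt_nonneg _)]
  calc ∫⁻ x, (∫⁻ u, ENNReal.ofReal (gaussDensity a (x - u)) ∂p) *
          ∫⁻ v, ENNReal.ofReal (gaussDensity b (x - v)) ∂q
      = ∫⁻ x, ∫⁻ u, ∫⁻ v, ENNReal.ofReal (gaussDensity a (x - u)) *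
          ENNReal.ofReal (gaussDensity b (x - v)) ∂q ∂p := by
        refine lintegral_congr fun x => (lintegral_lintegral_mul ?_ ?_).symm <;> fun_prop
    _ = ∫⁻ u, ∫⁻ v, (∫⁻ x, ENNReal.ofReal (gaussDensity a (x - u)) *
          ENNReal.ofReal (gaussDensity b (x - v))) ∂q ∂p := by
        rw [lintegral_lintegral_swap (by fun_prop)]
        exact lintegral_congr fun u => lintegral_lintegral_swap (by fun_prop)
    _ = ∫⁻ u, ∫⁻ v, ENNReal.ofReal (gaussDensity √(a ^ 2 + b ^ 2) (u - v)) ∂q ∂p := by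
        simp_rw [lintegral_gaussDensity_mul_gaussDensity ha hb]

lemma integrable_gaussMixture_mul [IsFiniteMeasure p] [IsFiniteMeasure q]
    (ha : 0 < a) (hb : 0 < b) :
    Integrable (fun x => gaussMixture a p x * gaussMixture b q x) := by
  have hnonneg : ∀ x, 0 ≤ gaussMixture a p x * gaussMixture b q x := fun x =>
    mul_nonneg (gaussMixture_nonneg ha.le x) (gaussMixture_nonneg hb.le x)
  refine ⟨(stronglyMeasurable_gaussMixture.mul
      stronglyMeasurable_gaussMixture).aestronglyMeasurable,
    (hasFiniteIntegral_iff_ofReal (ae_of_all _ hnonneg)).2 ?_⟩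
  simp_rw [ENNReal.ofReal_mul (gaussMixture_nonneg ha.le _)]
  rw [lintegral_ofReal_gaussMixture_mul ha hb, ← ofReal_integral_eq_lintegral_ofReal
    (integrable_gaussMixture (sqrt_nonneg _)) (ae_of_all _ (gaussMixture_nonneg (sqrt_nonneg _)))]
  exact ENNReal.ofReal_lt_top

lemma integral_gaussMixture_mul [IsFiniteMeasure p] [IsFiniteMeasure q]
    (ha : 0 < a) (hb : 0 < b) :
    ∫ x, gaussMixture a p x * gaussMixture b q x =
      ∫ u, gaussMixture √(a ^ 2 + b ^ 2) q u ∂p := by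
  rw [integral_eq_lintegral_of_nonneg_ae (ae_of_all _ fun x =>
      mul_nonneg (gaussMixture_nonneg ha.le x) (gaussMixture_nonneg hb.le x))
      (integrable_gaussMixture_mul ha hb).aestronglyMeasurable,
    integral_eq_lintegral_of_nonneg_ae (ae_of_all _ (gaussMixture_nonneg (sqrt_nonneg _)))
      stronglyMeasurable_gaussMixture.aestronglyMeasurable]
  simp_rw [ENNReal.ofReal_mul (gaussMixture_nonneg ha.le _)]
  rw [lintegral_ofReal_gaussMixture_mul ha hb]

lemma integral_gaussMixture_le [IsFiniteMeasure p] [IsFiniteMeasure q] (hs : 0 ≤ s) :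
    ∫ u, gaussMixture s q u ∂p ≤ gaussDensity s 0 * q.real Set.univ * p.real Set.univ := by
  refine (Real.le_norm_self _).trans
    (norm_integral_le_of_norm_le_const (ae_of_all _ fun u => ?_))
  rw [Real.norm_of_nonneg (gaussMixture_nonneg hs u)]
  exact gaussMixture_le hs u

lemma memLp_two_gaussMixture [IsFiniteMeasure p] (hs : 0 < s) :
    MemLp (gaussMixture s p) 2 :=
  (memLp_two_iff_integrable_sq stronglyMeasurable_gaussMixture.aestronglyMeasurable).2
    (by simpa only [sq] using integrable_gaussMixture_mul hs hs (p := p) (q := p))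

lemma integral_gaussMixture_sub_mul_sub [IsFiniteMeasure p] [IsFiniteMeasure q]
    (ha : 0 < a) (hb : 0 < b) :
    ∫ x, (gaussMixture a p x - gaussMixture a q x) * (gaussMixture b p x - gaussMixture b q x) =
      (∫ u, gaussMixture √(a ^ 2 + b ^ 2) p u ∂p) -
        (∫ u, gaussMixture √(a ^ 2 + b ^ 2) q u ∂p) -
        (∫ u, gaussMixture √(a ^ 2 + b ^ 2) p u ∂q) +
        ∫ u, gaussMixture √(a ^ 2 + b ^ 2) q u ∂q := by
  simp_rw [sub_mul, mul_sub]
  rw [integral_sub, integral_sub, integral_sub, integral_gaussMixture_mul ha hb,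
    integral_gaussMixture_mul ha hb, integral_gaussMixture_mul ha hb,
    integral_gaussMixture_mul ha hb]
  · ring
  all_goals first
    | exact integrable_gaussMixture_mul ha hb
    | exact (integrable_gaussMixture_mul ha hb).sub (integrable_gaussMixture_mul ha hb)

lemma integral_sq_gaussMixture_sub_le [IsProbabilityMeasure p] [IsProbabilityMeasure q]
    (hs : 0 < s) :
    ∫ x, (gaussMixture s p x - gaussMixture s q x) ^ 2 ≤
      2 * gaussDensity √(s ^ 2 + s ^ 2) 0 := by
  have hc := sqrt_nonneg (s ^ 2 + s ^ 2)
  have hpp := integral_gaussMixture_le hc (p := p) (q := p)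
  have hqq := integral_gaussMixture_le hc (p := q) (q := q)
  have hpq : 0 ≤ ∫ u, gaussMixture √(s ^ 2 + s ^ 2) q u ∂p :=
    integral_nonneg fun u => gaussMixture_nonneg hc u
  have hqp : 0 ≤ ∫ u, gaussMixture √(s ^ 2 + s ^ 2) p u ∂q :=
    integral_nonneg fun u => gaussMixture_nonneg hc u
  simp only [probReal_univ, mul_one] at hpp hqq
  simp_rw [sq (_ - _ : ℝ)]
  rw [integral_gaussMixture_sub_mul_sub hs hs]
  linarith

end GaussMixture

lemma sq_integral_mul_le_integral_sq_mul_integral_sq {α : Type*} [MeasurableSpace α] {μ : Measure α}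
    {f g : α → ℝ} (hf : MemLp f 2 μ) (hg : MemLp g 2 μ) :
    (∫ a, f a * g a ∂μ) ^ 2 ≤ (∫ a, f a ^ 2 ∂μ) * ∫ a, g a ^ 2 ∂μ := by
  have inner_toLp : ∀ {f g : α → ℝ} (hf : MemLp f 2 μ) (hg : MemLp g 2 μ),
      inner ℝ (hf.toLp f) (hg.toLp g) = ∫ a, f a * g a ∂μ := fun hf hg => by
    rw [L2.inner_def]
    refine integral_congr_ae ?_
    filter_upwards [hf.coeFn_toLp, hg.coeFn_toLp] with a hfa hga
    rw [hfa, hga, Real.inner_apply]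
  simpa only [inner_toLp, ← sq] using real_inner_mul_inner_self_le (hf.toLp f) (hg.toLp g)

lemma tendsto_integral_sq_gaussMixture_sub_of_sq_lt {p : ℕ → Measure ℝ} {q : Measure ℝ}
    [∀ n, IsProbabilityMeasure (p n)] [IsProbabilityMeasure q] {b τ : ℝ}
    (hb : 0 < b) (hτ : 0 < τ) (hbτ : b ^ 2 < 2 * τ ^ 2)
    (h : Tendsto (fun n => ∫ x, (gaussMixture b (p n) x - gaussMixture b q x) ^ 2) atTop (𝓝 0)) :
    Tendsto (fun n => ∫ x, (gaussMixture τ (p n) x - gaussMixture τ q x) ^ 2) atTop (𝓝 0) := by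
  set a := √(2 * τ ^ 2 - b ^ 2)
  have ha : 0 < a := sqrt_pos.2 (by linarith)
  have hab : a ^ 2 + b ^ 2 = τ ^ 2 + τ ^ 2 := by rw [sq_sqrt (by linarith)]; ring
  set B := 2 * gaussDensity √(a ^ 2 + a ^ 2) 0
  have hbound : ∀ n, ∫ x, (gaussMixture τ (p n) x - gaussMixture τ q x) ^ 2 ≤
      √(B * ∫ x, (gaussMixture b (p n) x - gaussMixture b q x) ^ 2) := fun n => by
    refine (le_abs_self _).trans (abs_le_sqrt ?_)
    have hcross : ∫ x, (gaussMixture τ (p n) x - gaussMixture τ q x) ^ 2 =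
        ∫ x, (gaussMixture a (p n) x - gaussMixture a q x) *
          (gaussMixture b (p n) x - gaussMixture b q x) := by
      simp_rw [sq]
      rw [integral_gaussMixture_sub_mul_sub hτ hτ, integral_gaussMixture_sub_mul_sub ha hb, hab]
    rw [hcross]
    refine (sq_integral_mul_le_integral_sq_mul_integral_sq
      ((memLp_two_gaussMixture ha).sub (memLp_two_gaussMixture ha))
      ((memLp_two_gaussMixture hb).sub (memLp_two_gaussMixture hb))).trans ?_
    exact mul_le_mul_of_nonneg_right (integral_sq_gaussMixture_sub_le ha)
      (integral_nonneg fun x => sq_nonneg _)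
  have hlim : Tendsto (fun n => √(B * ∫ x, (gaussMixture b (p n) x - gaussMixture b q x) ^ 2))
      atTop (𝓝 0) := by
    simpa using (h.const_mul B).sqrt
  exact squeeze_zero (fun n => integral_nonneg fun x => sq_nonneg _) hbound hlim

-- Any ratio in `(1/2, 1)` would do in place of `3/4`.
lemma Ioi_subset_of_lt_two_mul {S : Set ℝ} {t₀ : ℝ} (h₀ : t₀ ∈ S)
    (hS : ∀ t ∈ S, ∀ t' > 0, t < 2 * t' → t' ∈ S) : Set.Ioi 0 ⊆ S := by
  have key : ∀ k : ℕ, ∀ t > 0, t₀ * (3 / 4) ^ k < t → t ∈ S := by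
    intro k
    induction k with
    | zero => exact fun t ht h => hS t₀ h₀ t ht (by linarith)
    | succ k ih =>
      intro t ht h
      refine hS (4 / 3 * t) (ih _ (by positivity) ?_) t ht (by linarith)
      rw [pow_succ] at h
      linarith
  intro t (ht : 0 < t)
  have hlim : Tendsto (fun k : ℕ => t₀ * (3 / 4 : ℝ) ^ k) atTop (𝓝 0) := by
    simpa using (tendsto_pow_atTop_nhds_zero_of_lt_one (by norm_num) (by norm_num)).const_mul t₀
  obtain ⟨k, hk⟩ := (hlim.eventually_lt_const ht).exists
  exact key k t ht hk

theorem mixture_L2_convergence_transfer_general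
    (σ : ℝ) (hσ : 0 < σ)
    (gseq : ℕ → Measure ℝ) (g : Measure ℝ)
    [∀ n, IsProbabilityMeasure (gseq n)] [IsProbabilityMeasure g]
    (hconv : Tendsto (fun n =>
        ∫ x : ℝ, ((∫ u, gaussDensity σ (x - u) ∂(gseq n)) -
            ∫ u, gaussDensity σ (x - u) ∂g) ^ 2) atTop (nhds 0)) :
    ∀ τ : ℝ, 0 < τ →
      Tendsto (fun n =>
          ∫ x : ℝ, ((∫ u, gaussDensity τ (x - u) ∂(gseq n)) -
              ∫ u, gaussDensity τ (x - u) ∂g) ^ 2) atTop (nhds 0) := by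
  intro τ hτ
  let S : Set ℝ := {t | 0 < t ∧ Tendsto (fun n =>
    ∫ x, (gaussMixture √t (gseq n) x - gaussMixture √t g x) ^ 2) atTop (𝓝 0)}
  have hσS : σ ^ 2 ∈ S := ⟨by positivity, by rw [sqrt_sq hσ.le]; exact hconv⟩
  have hstep : ∀ t ∈ S, ∀ t' > 0, t < 2 * t' → t' ∈ S := fun t ⟨ht, hlim⟩ t' ht' hlt =>
    ⟨ht', tendsto_integral_sq_gaussMixture_sub_of_sq_lt (sqrt_pos.2 ht) (sqrt_pos.2 ht')
      (by rwa [sq_sqrt ht.le, sq_sqrt ht'.le]) hlim⟩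
  have hτS : τ ^ 2 ∈ S := Ioi_subset_of_lt_two_mul hσS hstep (Set.mem_Ioi.2 (by positivity))
  simpa only [sqrt_sq hτ.le, gaussMixture] using hτS.2

/-- Deterministic version of Lemma 2 of the paper: if the Gaussian mixtures of the compactly
supported mixing distributions `g_n` converge in `L²` to the Gaussian mixture of `g` at the
noise scale `σ`, then the same holds at every noise scale `τ > 0`. -/
theorem mixture_L2_convergence_transfer
    (M σ : ℝ) (hM : 0 < M) (hσ : 0 < σ)
    (gseq : ℕ → Measure ℝ) (g : Measure ℝ)
    [∀ n, IsProbabilityMeasure (gseq n)] [IsProbabilityMeasure g]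
    (hsuppseq : ∀ n, gseq n (Set.Icc (-M) M)ᶜ = 0)
    (hsupp : g (Set.Icc (-M) M)ᶜ = 0)
    (hconv : Tendsto (fun n =>
        ∫ x : ℝ, ((∫ u, gaussDensity σ (x - u) ∂(gseq n)) -
            ∫ u, gaussDensity σ (x - u) ∂g) ^ 2) atTop (nhds 0)) :
    ∀ τ : ℝ, 0 < τ →
      Tendsto (fun n =>
          ∫ x : ℝ, ((∫ u, gaussDensity τ (x - u) ∂(gseq n)) -
              ∫ u, gaussDensity τ (x - u) ∂g) ^ 2) atTop (nhds 0) :=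
  mixture_L2_convergence_transfer_general σ hσ gseq g hconv
end
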